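/- Let κ be an uncountable regular cardinal with κ^{<κ}=κ. If λ = cov(M_κ) = cof(M_κ), where M_κ is the ideal of κ-meagre subsets of 2^κ, then there exists a λ-κ-Lusin set L ⊆ 2^κ, i.e., a set of cardinality at least λ such that |L ∩ X| < λ for every κ-meagre set X. -/

import Mathlib

/-!
For regular `κ`, the space `A^κ` satisfies a `κ`-Baire category theorem: a decreasing chain of
fewer than `κ` basic open sets `[x ↾ ξ]` contains a basic open set, so a recursion of length `κ`
can shrink a basic open set past each of `κ` nowhere dense sets in turn. Hence `κ < cov(M_κ)`,
and `λ` is infinite. Enumerate a cofinal family `(M_α)_{α<λ}` of `κ`-meagre sets and choose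
`x_α ∉ M_β ∪ {x_β}` for all `β < α`; this is possible because fewer than `λ = cov(M_κ)`
`κ`-meagre sets never cover. A `κ`-meagre set lies in some `M_α`, so it contains only the
`x_β` with `β ≤ α`: fewer than `λ` of them.
-/

noncomputable section

open Cardinal Set

namespace GenSp

/-- The index set: a canonical type of order type `κ.ord`. -/
abbrev I (κ : Cardinal.{0}) : Type := κ.ord.ToType

variable (κ : Cardinal.{0}) (A : Type)

/-- The generalized space `A^κ`. -/
abbrev Sp : Type := I κ → A

/-- The basic clopen set `[x ↾ ξ]`: all functions agreeing with `x` below `ξ`. -/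
def cyl (x : Sp κ A) (ξ : I κ) : Set (Sp κ A) := {y | ∀ β < ξ, y β = x β}

/-- The bounded topology on `A^κ`, generated by the basic clopen sets. -/
def bt : TopologicalSpace (Sp κ A) :=
  .generateFrom {S | ∃ x ξ, S = cyl κ A x ξ}

/-- Open in the bounded topology. -/
def OpenK (s : Set (Sp κ A)) : Prop := @IsOpen _ (bt κ A) s

/-- Closed in the bounded topology. -/
def ClosedK (s : Set (Sp κ A)) : Prop := @IsClosed _ (bt κ A) s

/-- Nowhere dense in the bounded topology. -/
def NwdK (s : Set (Sp κ A)) : Prop := @IsNowhereDense _ (bt κ A) s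

/-- κ-meagre: a union of (at most) κ nowhere dense sets. -/
def MeagreK (s : Set (Sp κ A)) : Prop :=
  ∃ f : I κ → Set (Sp κ A), (∀ i, NwdK κ A (f i)) ∧ s = ⋃ i, f i

/-- κ-strongly null set. -/
def SNullK (S : Set (Sp κ A)) : Prop :=
  ∀ ξ : I κ → I κ, ∃ a : I κ → Sp κ A, S ⊆ ⋃ α, cyl κ A (a α) (ξ α)

/-- Coordinatewise addition over `ℤ₂` (translation by `x`). -/
def xadd (x y : Sp κ Bool) : Sp κ Bool := fun i => xor (x i) (y i)

/-- The covering number of the κ-meagre ideal. -/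
def covM : Cardinal :=
  sInf {c | ∃ 𝒜 : Set (Set (Sp κ A)), #𝒜 = c ∧ (∀ s ∈ 𝒜, MeagreK κ A s) ∧ ⋃₀ 𝒜 = Set.univ}

/-- The cofinality of the κ-meagre ideal. -/
def cofM : Cardinal :=
  sInf {c | ∃ 𝒜 : Set (Set (Sp κ A)), #𝒜 = c ∧ (∀ s ∈ 𝒜, MeagreK κ A s) ∧
    ∀ t, MeagreK κ A t → ∃ s ∈ 𝒜, t ⊆ s}

/-- κ is weakly compact: uncountable and with the partition property κ → (κ)²₂. -/
def IsWeaklyCompact (κ : Cardinal.{0}) : Prop :=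
  ℵ₀ < κ ∧ ∀ c : I κ → I κ → Bool, ∃ H : Set (I κ), #H = κ ∧
    ∃ b : Bool, ∀ i ∈ H, ∀ j ∈ H, i < j → c i j = b

/-- `S` is κ-meagre relative to `P` (in the subspace topology). -/
def MeagreInK (P S : Set (Sp κ A)) : Prop :=
  ∃ f : I κ → Set P,
    (∀ i, @IsNowhereDense _ (TopologicalSpace.induced Subtype.val (bt κ A)) (f i)) ∧
    {x : P | (x : Sp κ A) ∈ S} = ⋃ i, f i

/-- Perfect set in the bounded topology. -/
def PerfK (P : Set (Sp κ A)) : Prop := @Perfect _ (bt κ A) P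

/-- Perfectly κ-meagre set. -/
def PMeagreK (S : Set (Sp κ A)) : Prop := ∀ P, PerfK κ A P → MeagreInK κ A P S

/-- κ-λ-set. -/
def KLambdaSet (S : Set (Sp κ A)) : Prop :=
  ∀ B ⊆ S, #B ≤ κ → ∃ G : I κ → Set (Sp κ A),
    (∀ i, OpenK κ A (G i)) ∧ (⋂ i, G i) ∩ S = B

/-- κ-σ-set. -/
def KSigmaSet (S : Set (Sp κ A)) : Prop :=
  ∀ F : I κ → Set (Sp κ A), (∀ i, ClosedK κ A (F i)) →
    ∃ G : I κ → Set (Sp κ A), (∀ i, OpenK κ A (G i)) ∧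
      S ∩ (⋃ i, F i) = S ∩ (⋂ i, G i)

/-- κ-γ-set: every open (proper) κ-cover contains a κ-γ-subcover of size κ. -/
def KGammaSet (X : Set (Sp κ A)) : Prop :=
  ∀ 𝒰 : Set (Set (Sp κ A)), (∀ U ∈ 𝒰, OpenK κ A U) → X ∉ 𝒰 →
    (∀ C ⊆ X, #C < κ → ∃ U ∈ 𝒰, C ⊆ U) →
    ∃ U : I κ → Set (Sp κ A), (∀ α, U α ∈ 𝒰) ∧
      X ⊆ ⋃ α, ⋂ β, ⋂ (_ : α < β), U β

/-- A (proper) open cover of `X` of size κ, indexed by `I κ`. -/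
def IsOCovSeq (X : Set (Sp κ A)) (U : I κ → Set (Sp κ A)) : Prop :=
  (∀ α, OpenK κ A (U α)) ∧ (∀ α, U α ≠ X) ∧ X ⊆ ⋃ α, U α

/-- A (proper) κ-γ-cover of `X`, indexed by `I κ`. -/
def IsGammaCovSeq (X : Set (Sp κ A)) (U : I κ → Set (Sp κ A)) : Prop :=
  (∀ α, OpenK κ A (U α)) ∧ (∀ α, U α ≠ X) ∧
    X ⊆ ⋃ α, ⋂ β, ⋂ (_ : α < β), U β

/-- The cover `U` is essentially of size κ: no subfamily of size `< κ` covers `X`. -/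
def EssK (X : Set (Sp κ A)) (U : I κ → Set (Sp κ A)) : Prop :=
  ∀ s : Set (I κ), #s < κ → ¬ X ⊆ ⋃ β ∈ s, U β

/-- The selection principle `S₁^κ(Γ_κ, Γ_κ)`. -/
def S1GammaGamma (X : Set (Sp κ A)) : Prop :=
  ∀ 𝒰 : I κ → I κ → Set (Sp κ A), (∀ α, IsGammaCovSeq κ A X (𝒰 α)) →
    ∃ f : I κ → I κ, IsGammaCovSeq κ A X (fun α => 𝒰 α (f α))

/-- The κ-Hurewicz property `U^κ_{<κ}(O_κ, Γ_κ)`. -/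
def KHurewicz (X : Set (Sp κ A)) : Prop :=
  ∀ 𝒰 : I κ → I κ → Set (Sp κ A), (∀ α, IsOCovSeq κ A X (𝒰 α)) →
    (∀ α, EssK κ A X (𝒰 α)) →
    ∃ V : I κ → Set (I κ), (∀ α, #(V α) < κ) ∧
      IsGammaCovSeq κ A X (fun α => ⋃ β ∈ V α, 𝒰 α β)

/-- The κ-Menger property `U^κ_{<κ}(O_κ, O_κ)`. -/
def KMenger (X : Set (Sp κ A)) : Prop :=
  ∀ 𝒰 : I κ → I κ → Set (Sp κ A), (∀ α, IsOCovSeq κ A X (𝒰 α)) →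
    (∀ α, EssK κ A X (𝒰 α)) →
    ∃ V : I κ → Set (I κ), (∀ α, #(V α) < κ) ∧
      IsOCovSeq κ A X (fun α => ⋃ β ∈ V α, 𝒰 α β)

/-- The κ-Rothberger property `S₁^κ(O_κ, O_κ)`. -/
def KRothberger (X : Set (Sp κ A)) : Prop :=
  ∀ 𝒰 : I κ → I κ → Set (Sp κ A), (∀ α, IsOCovSeq κ A X (𝒰 α)) →
    ∃ f : I κ → I κ, IsOCovSeq κ A X (fun α => 𝒰 α (f α))

/-- Closed unbounded subset of `I κ`. -/
def IsClubK (S : Set (I κ)) : Prop :=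
  (∀ a : I κ, ∃ b ∈ S, a < b) ∧
  (∀ a : I κ, (∃ b, b < a) → (∀ b < a, ∃ c ∈ S, b < c ∧ c < a) → a ∈ S)

/-- Stationary subset of `I κ`. -/
def IsStatK (S : Set (I κ)) : Prop :=
  ∀ C : Set (I κ), IsClubK κ C → (S ∩ C).Nonempty

/-- The diamond principle `◇_κ(E)`. -/
def DiamondK (E : Set (I κ)) : Prop :=
  ∃ s : I κ → Set (I κ), (∀ α, s α ⊆ Iio α) ∧
    ∀ X : Set (I κ), IsStatK κ {α | α ∈ E ∧ X ∩ Iio α = s α}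

/-- The guessing principle `◇_κ(E, 2^κ, NS_κ)`. -/
def DiamondFunK (E : Set (I κ)) : Prop :=
  ∃ s : I κ → Sp κ Bool,
    ∀ x : Sp κ Bool, IsStatK κ {α | α ∈ E ∧ ∀ β < α, x β = s α β}

/-- `S` is `X`-small. -/
def XSmall (X : Set (I κ)) (S : Set (Sp κ A)) : Prop :=
  ∃ a : I κ → Sp κ A, S ⊆ ⋃ α ∈ X, cyl κ A (a α) α

/-- `S` is small in `A^κ`. -/
def SmallK (S : Set (Sp κ A)) : Prop :=
  ∃ lam : Cardinal, lam < κ ∧ ∀ α : I κ, ∃ T : Set (Sp κ A),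
    #T ≤ lam ∧ S ⊆ ⋃ x ∈ T, cyl κ A x α

protected lemma _root_.IsNowhereDense.union {X : Type*} [TopologicalSpace X] {s t : Set X}
    (hs : IsNowhereDense s) (ht : IsNowhereDense t) : IsNowhereDense (s ∪ t) := by
  obtain ⟨hso, hsd⟩ := isClosed_isNowhereDense_iff_compl.1 ⟨isClosed_closure, hs.closure⟩
  obtain ⟨hto, htd⟩ := isClosed_isNowhereDense_iff_compl.1 ⟨isClosed_closure, ht.closure⟩
  have hclosure : IsClosed (closure s ∪ closure t) ∧ IsNowhereDense (closure s ∪ closure t) := by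
    rw [isClosed_isNowhereDense_iff_compl, compl_union]
    exact ⟨hso.inter hto, hsd.inter_of_isOpen_left htd hso⟩
  exact hclosure.2.mono (union_subset_union subset_closure subset_closure)

protected lemma _root_.WellFounded.exists_rec_spec {ι β : Type*} {r : ι → ι → Prop}
    (hr : WellFounded r) (P : ∀ a, (∀ b, r b a → β) → β → Prop)
    (step : ∀ a prev, ∃ y, P a prev y) : ∃ g : ι → β, ∀ a, P a (fun b _ => g b) (g a) := by
  refine ⟨hr.fix fun a prev => (step a prev).choose, fun a => ?_⟩
  rw [hr.fix_eq]
  exact (step a _).choose_spec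

attribute [local instance] bt

section

variable {κ A}

lemma exists_surjective_of_mk_le {ι : Type} [Nonempty ι] (hι : #ι ≤ κ) :
    ∃ σ : I κ → ι, Function.Surjective σ := by
  rw [← mk_ord_toType κ, le_def] at hι
  obtain ⟨e⟩ := hι
  exact ⟨Function.invFun e, Function.invFun_surjective e.injective⟩

lemma mk_Iio_I_lt (i : I κ) : #(Iio i) < κ := by
  simpa using mk_Iio_lt i

lemma nonempty_I (hκ : ℵ₀ ≤ κ) : Nonempty (I κ) :=
  mk_ne_zero_iff.1 <| by simpa using (aleph0_pos.trans_le hκ).ne'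

lemma mem_cyl_self (x : Sp κ A) (ξ : I κ) : x ∈ cyl κ A x ξ := fun _ _ => rfl

lemma cyl_eq_of_mem {x y : Sp κ A} {ξ : I κ} (h : y ∈ cyl κ A x ξ) :
    cyl κ A y ξ = cyl κ A x ξ := by
  ext z
  exact forall₂_congr fun β hβ => by rw [h β hβ]

lemma cyl_subset_cyl {x : Sp κ A} {ξ η : I κ} (h : ξ ≤ η) : cyl κ A x η ⊆ cyl κ A x ξ :=
  fun _ hy β hβ => hy β (hβ.trans_le h)

lemma isOpen_cyl (x : Sp κ A) (ξ : I κ) : IsOpen (cyl κ A x ξ) :=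
  TopologicalSpace.isOpen_generateFrom_of_mem ⟨x, ξ, rfl⟩

lemma isTopologicalBasis_cyl [Nonempty (I κ)] :
    TopologicalSpace.IsTopologicalBasis {S : Set (Sp κ A) | ∃ x ξ, S = cyl κ A x ξ} := by
  refine ⟨?_, ?_, rfl⟩
  · rintro _ ⟨x₁, ξ₁, rfl⟩ _ ⟨x₂, ξ₂, rfl⟩ y ⟨hy₁, hy₂⟩
    refine ⟨cyl κ A y (max ξ₁ ξ₂), ⟨y, _, rfl⟩, mem_cyl_self y _, subset_inter ?_ ?_⟩
    · rw [← cyl_eq_of_mem hy₁]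
      exact cyl_subset_cyl (le_max_left _ _)
    · rw [← cyl_eq_of_mem hy₂]
      exact cyl_subset_cyl (le_max_right _ _)
  · refine eq_univ_of_forall fun y => ?_
    obtain ⟨ξ⟩ := ‹Nonempty (I κ)›
    exact ⟨cyl κ A y ξ, ⟨y, ξ, rfl⟩, mem_cyl_self y ξ⟩

lemma exists_cyl_subset_disjoint [Nonempty (I κ)] {U S : Set (Sp κ A)} (hU : IsOpen U)
    (hne : U.Nonempty) (hS : IsNowhereDense S) :
    ∃ y ξ, cyl κ A y ξ ⊆ U ∧ Disjoint (cyl κ A y ξ) S := by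
  have hnot : ¬ U ⊆ closure S := fun hsub => by
    obtain ⟨u, hu⟩ := hne
    have hu' := interior_maximal hsub hU hu
    rwa [show interior (closure S) = ∅ from hS] at hu'
  obtain ⟨y, hyU, hyS⟩ := not_subset.1 hnot
  obtain ⟨_, ⟨x, ξ, rfl⟩, hyV, hVsub⟩ := isTopologicalBasis_cyl.isOpen_iff.1
    (hU.inter isClosed_closure.isOpen_compl) y ⟨hyU, hyS⟩
  rw [← cyl_eq_of_mem hyV] at hVsub
  exact ⟨y, ξ, fun z hz => (hVsub hz).1,
    disjoint_left.2 fun z hz hzS => (hVsub hz).2 (subset_closure hzS)⟩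

lemma t1Space_sp [NoMaxOrder (I κ)] : T1Space (Sp κ A) := by
  refine t1Space_iff_exists_open.2 fun x y hxy => ?_
  obtain ⟨β, hβ⟩ := Function.ne_iff.1 hxy
  obtain ⟨ξ, hξ⟩ := exists_gt β
  exact ⟨cyl κ A x ξ, isOpen_cyl x ξ, mem_cyl_self x ξ, fun hy => hβ (hy β hξ).symm⟩

lemma isNowhereDense_singleton [Nonempty (I κ)] [NoMaxOrder (I κ)] [Nontrivial A]
    (x : Sp κ A) : IsNowhereDense {x} := by
  have := t1Space_sp (κ := κ) (A := A)
  rw [isClosed_singleton.isNowhereDense_iff, eq_empty_iff_forall_notMem]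
  intro y hy
  obtain ⟨_, ⟨z, ξ, rfl⟩, hyV, hVsub⟩ :=
    isTopologicalBasis_cyl.isOpen_iff.1 isOpen_interior y hy
  rw [← cyl_eq_of_mem hyV] at hVsub
  obtain ⟨a, ha⟩ := exists_ne (y ξ)
  have hflip : Function.update y ξ a ∈ cyl κ A y ξ := fun β hβ => Function.update_of_ne hβ.ne _ _
  have hy' : y = x := mem_singleton_iff.1 (interior_subset (hVsub (mem_cyl_self y ξ)))
  have hflip' : Function.update y ξ a = x := mem_singleton_iff.1 (interior_subset (hVsub hflip))
  exact ha (by simpa [hy'] using congrFun hflip' ξ)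

lemma MeagreK.union {s t : Set (Sp κ A)} (hs : MeagreK κ A s) (ht : MeagreK κ A t) :
    MeagreK κ A (s ∪ t) := by
  obtain ⟨f, hf, rfl⟩ := hs
  obtain ⟨g, hg, rfl⟩ := ht
  exact ⟨fun i => f i ∪ g i, fun i => (hf i).union (hg i), (iUnion_union_distrib f g).symm⟩

lemma meagreK_singleton [Nonempty (I κ)] [NoMaxOrder (I κ)] [Nontrivial A] (x : Sp κ A) :
    MeagreK κ A {x} :=
  ⟨fun _ => {x}, fun _ => isNowhereDense_singleton x, (iUnion_const _).symm⟩

lemma MeagreK.iUnion (hκ : ℵ₀ ≤ κ) {ι : Type} (hι : #ι ≤ κ) {s : ι → Set (Sp κ A)}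
    (hs : ∀ i, MeagreK κ A (s i)) : MeagreK κ A (⋃ i, s i) := by
  choose f hf hfs using hs
  cases isEmpty_or_nonempty ι
  · exact ⟨fun _ => ∅, fun _ => isNowhereDense_empty, by simp⟩
  have := nonempty_I hκ
  obtain ⟨σ, hσ⟩ := exists_surjective_of_mk_le (κ := κ) (ι := ι × I κ) <| by
    simpa [mk_ord_toType, mul_eq_self hκ] using mul_le_mul' hι (le_refl κ)
  refine ⟨fun k => f (σ k).1 (σ k).2, fun k => hf _ _, ?_⟩
  rw [hσ.iUnion_comp (fun p => f p.1 p.2), iUnion_prod']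
  exact iUnion_congr hfs

lemma exists_forall_lt_of_mk_lt (hreg : κ.IsRegular) {ι : Type} (hι : #ι < κ) (f : ι → I κ) :
    ∃ b, ∀ i, f i < b := by
  have hcof : ¬ IsCofinal (range f) := fun h => ((Order.cof_le h).trans mk_range_le).not_gt <| by
    rwa [Ordinal.cof_toType, hreg.cof_ord]
  simpa [IsCofinal] using hcof

lemma exists_forall_mem_cyl_of_antitone [Nonempty A] {ι : Type*} [LinearOrder ι]
    {x : ι → Sp κ A} {ξ : ι → I κ} (hx : Antitone fun i => cyl κ A (x i) (ξ i)) :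
    ∃ z, ∀ i, z ∈ cyl κ A (x i) (ξ i) := by
  classical
  refine ⟨fun t => if h : ∃ i, t < ξ i then x h.choose t else Classical.arbitrary A,
    fun i t ht => ?_⟩
  have h : ∃ i, t < ξ i := ⟨i, ht⟩
  show (if h : ∃ i, t < ξ i then x h.choose t else _) = x i t
  rw [dif_pos h]
  rcases le_total i h.choose with hij | hji
  · exact hx hij (mem_cyl_self _ _) t ht
  · exact (hx hji (mem_cyl_self _ _) t h.choose_spec).symm

lemma exists_cyl_subset_of_antitone [Nonempty A] (hreg : κ.IsRegular) {ι : Type}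
    [LinearOrder ι] (hι : #ι < κ) {x : ι → Sp κ A} {ξ : ι → I κ}
    (hx : Antitone fun i => cyl κ A (x i) (ξ i)) :
    ∃ y η, ∀ i, cyl κ A y η ⊆ cyl κ A (x i) (ξ i) := by
  obtain ⟨z, hz⟩ := exists_forall_mem_cyl_of_antitone hx
  obtain ⟨η, hη⟩ := exists_forall_lt_of_mk_lt hreg hι ξ
  exact ⟨z, η, fun i => cyl_eq_of_mem (hz i) ▸ cyl_subset_cyl (hη i).le⟩

theorem exists_forall_notMem_of_isNowhereDense [Nonempty A] (hreg : κ.IsRegular)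
    {N : I κ → Set (Sp κ A)} (hN : ∀ i, IsNowhereDense (N i)) : ∃ z, ∀ i, z ∉ N i := by
  have := nonempty_I hreg.aleph0_le
  let C : Sp κ A × I κ → Set (Sp κ A) := fun p => cyl κ A p.1 p.2
  -- The step must be total, so it only shrinks the earlier cylinders when they form a chain;
  -- `hrestr` below shows that along the recursion they always do.
  have step : ∀ α (prev : ∀ β, β < α → Sp κ A × I κ), ∃ p,
      (Antitone (fun b : Iio α => C (prev b b.2)) → ∀ b : Iio α, C p ⊆ C (prev b b.2)) ∧
        Disjoint (C p) (N α) := by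
    intro α prev
    by_cases hchain : Antitone fun b : Iio α => C (prev b b.2)
    · obtain ⟨y, η, hy⟩ := exists_cyl_subset_of_antitone hreg (mk_Iio_I_lt α) hchain
      obtain ⟨y', η', hsub, hdisj⟩ :=
        exists_cyl_subset_disjoint (isOpen_cyl y η) ⟨y, mem_cyl_self y η⟩ (hN α)
      exact ⟨(y', η'), fun _ b => hsub.trans (hy b), hdisj⟩
    · obtain ⟨y, η, -, hdisj⟩ := exists_cyl_subset_disjoint isOpen_univ univ_nonempty (hN α)
      exact ⟨(y, η), fun h => absurd h hchain, hdisj⟩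
  obtain ⟨g, hg⟩ := wellFounded_lt.exists_rec_spec _ step
  have hrestr : ∀ α : I κ, Antitone fun b : Iio α => C (g b) := by
    intro α
    induction α using WellFoundedLT.induction with
    | _ α ih => exact antitone_iff_forall_lt.2 fun b b' hbb' => (hg b').1 (ih b' b'.2) ⟨b, hbb'⟩
  have hanti : Antitone (C ∘ g) :=
    antitone_iff_forall_lt.2 fun β α hβα => (hg α).1 (hrestr α) ⟨β, hβα⟩
  obtain ⟨z, hz⟩ := exists_forall_mem_cyl_of_antitone hanti
  exact ⟨z, fun α hzα => (hg α).2.notMem_of_mem_left (hz α) hzα⟩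

lemma not_meagreK_univ [Nonempty A] (hreg : κ.IsRegular) : ¬ MeagreK κ A univ := by
  rintro ⟨f, hf, hcover⟩
  obtain ⟨z, hz⟩ := exists_forall_notMem_of_isNowhereDense hreg hf
  obtain ⟨i, hi⟩ := mem_iUnion.1 (hcover ▸ mem_univ z)
  exact hz i hi

lemma lt_covM [Nontrivial A] (hreg : κ.IsRegular) : κ < covM κ A := by
  have := nonempty_I hreg.aleph0_le
  have := noMaxOrder hreg.aleph0_le
  obtain ⟨𝒜, h𝒜, hmeagre, hcover⟩ : covM κ A ∈ _ := csInf_mem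
    ⟨_, range singleton, rfl, forall_mem_range.2 meagreK_singleton,
      by rw [sUnion_range, iUnion_of_singleton]⟩
  by_contra! hle
  apply not_meagreK_univ (A := A) hreg
  rw [← hcover, sUnion_eq_iUnion]
  exact MeagreK.iUnion hreg.aleph0_le (h𝒜.trans_le hle) fun s => hmeagre s s.2

lemma exists_forall_notMem_of_mk_lt_covM {ι : Type} (hι : #ι < covM κ A)
    {s : ι → Set (Sp κ A)} (hs : ∀ i, MeagreK κ A (s i)) : ∃ y, ∀ i, y ∉ s i := by
  by_contra! hcover
  have hle : covM κ A ≤ #(range s) := csInf_le' ⟨range s, rfl, forall_mem_range.2 hs,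
    by rw [sUnion_range]; exact eq_univ_of_forall fun y => mem_iUnion.2 (hcover y)⟩
  exact hle.not_gt (mk_range_le.trans_lt hι)

lemma exists_cofinal_meagreK_seq :
    ∃ M : I (cofM κ A) → Set (Sp κ A),
      (∀ j, MeagreK κ A (M j)) ∧ ∀ t, MeagreK κ A t → ∃ j, t ⊆ M j := by
  obtain ⟨𝒜, h𝒜, hmeagre, hcofinal⟩ : cofM κ A ∈ _ := csInf_mem
    ⟨_, {s | MeagreK κ A s}, rfl, fun _ hs => hs, fun t ht => ⟨t, ht, subset_rfl⟩⟩
  obtain ⟨e⟩ := Cardinal.eq.1 ((mk_ord_toType _).trans h𝒜.symm)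
  refine ⟨fun j => e j, fun j => hmeagre _ (e j).2, fun t ht => ?_⟩
  obtain ⟨s, hs, hts⟩ := hcofinal t ht
  exact ⟨e.symm ⟨s, hs⟩, by simpa using hts⟩

theorem exists_lusin_set [Nonempty (I κ)] [NoMaxOrder (I κ)] [Nontrivial A] {lam : Cardinal.{0}}
    (hlam : ℵ₀ ≤ lam) (hcov : lam ≤ covM κ A) {M : I lam → Set (Sp κ A)}
    (hM : ∀ j, MeagreK κ A (M j)) (hMcof : ∀ t, MeagreK κ A t → ∃ j, t ⊆ M j) :
    ∃ L : Set (Sp κ A), lam ≤ #L ∧ ∀ X, MeagreK κ A X → #↥(L ∩ X) < lam := by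
  obtain ⟨x, hx⟩ := wellFounded_lt.exists_rec_spec
    (fun (α : I lam) (prev : ∀ β, β < α → Sp κ A) y => ∀ b : Iio α, y ∉ M b ∧ y ≠ prev b b.2)
    fun α prev => by
      obtain ⟨y, hy⟩ := exists_forall_notMem_of_mk_lt_covM ((mk_Iio_I_lt α).trans_le hcov)
        fun b => (hM b).union (meagreK_singleton (prev b b.2))
      exact ⟨y, fun b => not_or.1 (hy b)⟩
  have hinj : Function.Injective x :=
    .of_lt_imp_ne fun β α h => (hx α ⟨β, h⟩).2.symm
  refine ⟨range x, by rw [mk_range_eq x hinj, mk_ord_toType], fun X hX => ?_⟩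
  obtain ⟨j, hj⟩ := hMcof X hX
  have hsub : range x ∩ X ⊆ x '' Iic j := by
    rintro _ ⟨⟨α, rfl⟩, hαX⟩
    exact ⟨α, mem_Iic.2 <| not_lt.1 fun hjα => (hx α ⟨j, hjα⟩).1 (hj hαX), rfl⟩
  calc #↥(range x ∩ X) ≤ #(Iic j) := (mk_le_mk_of_subset hsub).trans mk_image_le
    _ < lam := by simpa using mk_Iic_lt j (by simp) (by simpa using hlam)

end

theorem stmt0_general (κ lam : Cardinal.{0}) (hreg : κ.IsRegular)
    (hcov : lam = covM κ Bool) (hcof : lam = cofM κ Bool) :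
    ∃ L : Set (Sp κ Bool), lam ≤ #L ∧ ∀ X, MeagreK κ Bool X → #↥(L ∩ X) < lam := by
  have := nonempty_I hreg.aleph0_le
  have := noMaxOrder hreg.aleph0_le
  obtain ⟨M, hM, hMcof⟩ := exists_cofinal_meagreK_seq (κ := κ) (A := Bool)
  subst hcof
  exact exists_lusin_set (hreg.aleph0_le.trans (lt_covM hreg).le |>.trans_eq hcov.symm)
    hcov.le hM hMcof

theorem stmt0 (κ lam : Cardinal.{0}) (hk : Cardinal.aleph0 < κ) (hreg : κ.IsRegular) (hpow : κ ^< κ = κ)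
    (hcov : lam = covM κ Bool) (hcof : lam = cofM κ Bool) :
    ∃ L : Set (Sp κ Bool), lam ≤ #L ∧ ∀ X, MeagreK κ Bool X → #↥(L ∩ X) < lam :=
  stmt0_general κ lam hreg hcov hcof

end GenSp
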